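/- (Regression-based formulation.) Under the rank condition, let V̂ := MY and Ẑ := [Y, X₁, V̂] (a T×(2G+k₁) matrix, which has full column rank under the rank condition), and let Ȳ := [Y, X₁]. Then the difference between the restricted and unrestricted residual sums of squares in the augmented regression satisfies yᵀM̄[Ȳ]y − yᵀM̄[Ẑ]y = T·yᵀΨ₀y = T·(β̃−β̂)ᵀΔ̂⁻¹(β̃−β̂); moreover yᵀM̄[Ȳ]y = T·yᵀΛ₄y and yᵀM̄[Ẑ]y = T·yᵀΛ₂y. -/

import Mathlib

/-!
The Frisch–Waugh–Lovell decomposition `P̄[[B, A]] = P̄[A] + P̄[M̄[A]B]` (for `[B, A]` of full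
column rank), applied to `Ȳ = [Y, X₁]` and twice to `Ẑ = [Y, [X₁, V̂]]`, gives
`M̄[Ȳ] = M₁ - P̄[M₁Y]` and `M̄[Ẑ] = M₁ - P̄[MY] - P̄[N₁Y]`, because `M₁ = N₁ + M` splits into
orthogonal projectors. With `A₁ = YᵀM₁Y = YᵀN₁Y + YᵀMY = A₂ + A₃` one has
`Δ̂ = T(A₂⁻¹ - A₁⁻¹) = T·A₂⁻¹A₃A₁⁻¹`, and expanding `C₁ᵀ(A₁A₃⁻¹A₂)C₁` shows
`T Ψ₀ = P̄[N₁Y] + P̄[MY] - P̄[M₁Y] = M̄[Ȳ] - M̄[Ẑ]`. Sandwiching between `M₁` gives `Λ₄` and `Λ₂`.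
-/

open Matrix

variable {T G k₁ k₂ : ℕ}

/-- Orthogonal projection `P̄[A] = A(AᵀA)⁻¹Aᵀ` onto the column space of `A`. -/
noncomputable def projM {n : Type*} [Fintype n] [DecidableEq n]
    (A : Matrix (Fin T) n ℝ) : Matrix (Fin T) (Fin T) ℝ :=
  A * (Aᵀ * A)⁻¹ * Aᵀ

/-- The annihilator `M̄[A] = I - P̄[A]`. -/
noncomputable def annM {n : Type*} [Fintype n] [DecidableEq n]
    (A : Matrix (Fin T) n ℝ) : Matrix (Fin T) (Fin T) ℝ :=
  1 - projM A

noncomputable def M1 (X₁ : Matrix (Fin T) (Fin k₁) ℝ) : Matrix (Fin T) (Fin T) ℝ :=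
  annM X₁

noncomputable def Pm (X₁ : Matrix (Fin T) (Fin k₁) ℝ) (X₂ : Matrix (Fin T) (Fin k₂) ℝ) :
    Matrix (Fin T) (Fin T) ℝ :=
  projM (fromCols X₁ X₂)

noncomputable def Mm (X₁ : Matrix (Fin T) (Fin k₁) ℝ) (X₂ : Matrix (Fin T) (Fin k₂) ℝ) :
    Matrix (Fin T) (Fin T) ℝ :=
  annM (fromCols X₁ X₂)

noncomputable def N1 (X₁ : Matrix (Fin T) (Fin k₁) ℝ) (X₂ : Matrix (Fin T) (Fin k₂) ℝ) :
    Matrix (Fin T) (Fin T) ℝ :=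
  M1 X₁ * Pm X₁ X₂

noncomputable def B1 (Y : Matrix (Fin T) (Fin G) ℝ) (X₁ : Matrix (Fin T) (Fin k₁) ℝ) :
    Matrix (Fin G) (Fin T) ℝ :=
  (Yᵀ * M1 X₁ * Y)⁻¹ * (Yᵀ * M1 X₁)

noncomputable def B2 (Y : Matrix (Fin T) (Fin G) ℝ) (X₁ : Matrix (Fin T) (Fin k₁) ℝ)
    (X₂ : Matrix (Fin T) (Fin k₂) ℝ) : Matrix (Fin G) (Fin T) ℝ :=
  (Yᵀ * N1 X₁ X₂ * Y)⁻¹ * (Yᵀ * N1 X₁ X₂)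

noncomputable def C1 (Y : Matrix (Fin T) (Fin G) ℝ) (X₁ : Matrix (Fin T) (Fin k₁) ℝ)
    (X₂ : Matrix (Fin T) (Fin k₂) ℝ) : Matrix (Fin G) (Fin T) ℝ :=
  B2 Y X₁ X₂ - B1 Y X₁

/-- OLS estimator `β̂`. -/
noncomputable def betaOLS (y : Fin T → ℝ) (Y : Matrix (Fin T) (Fin G) ℝ)
    (X₁ : Matrix (Fin T) (Fin k₁) ℝ) : Fin G → ℝ :=
  B1 Y X₁ *ᵥ y

/-- 2SLS estimator `β̃`. -/
noncomputable def beta2S (y : Fin T → ℝ) (Y : Matrix (Fin T) (Fin G) ℝ)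
    (X₁ : Matrix (Fin T) (Fin k₁) ℝ) (X₂ : Matrix (Fin T) (Fin k₂) ℝ) : Fin G → ℝ :=
  B2 Y X₁ X₂ *ᵥ y

noncomputable def OmIV (Y : Matrix (Fin T) (Fin G) ℝ) (X₁ : Matrix (Fin T) (Fin k₁) ℝ)
    (X₂ : Matrix (Fin T) (Fin k₂) ℝ) : Matrix (Fin G) (Fin G) ℝ :=
  (T : ℝ)⁻¹ • (Yᵀ * N1 X₁ X₂ * Y)

noncomputable def OmLS (Y : Matrix (Fin T) (Fin G) ℝ) (X₁ : Matrix (Fin T) (Fin k₁) ℝ) :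
    Matrix (Fin G) (Fin G) ℝ :=
  (T : ℝ)⁻¹ • (Yᵀ * M1 X₁ * Y)

noncomputable def SigV (Y : Matrix (Fin T) (Fin G) ℝ) (X₁ : Matrix (Fin T) (Fin k₁) ℝ)
    (X₂ : Matrix (Fin T) (Fin k₂) ℝ) : Matrix (Fin G) (Fin G) ℝ :=
  (T : ℝ)⁻¹ • (Yᵀ * Mm X₁ X₂ * Y)

noncomputable def Dhat (Y : Matrix (Fin T) (Fin G) ℝ) (X₁ : Matrix (Fin T) (Fin k₁) ℝ)
    (X₂ : Matrix (Fin T) (Fin k₂) ℝ) : Matrix (Fin G) (Fin G) ℝ :=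
  (OmIV Y X₁ X₂)⁻¹ - (OmLS Y X₁)⁻¹

noncomputable def Psi0 (Y : Matrix (Fin T) (Fin G) ℝ) (X₁ : Matrix (Fin T) (Fin k₁) ℝ)
    (X₂ : Matrix (Fin T) (Fin k₂) ℝ) : Matrix (Fin T) (Fin T) ℝ :=
  (C1 Y X₁ X₂)ᵀ * (Dhat Y X₁ X₂)⁻¹ * C1 Y X₁ X₂

noncomputable def N2 (Y : Matrix (Fin T) (Fin G) ℝ) (X₁ : Matrix (Fin T) (Fin k₁) ℝ)
    (X₂ : Matrix (Fin T) (Fin k₂) ℝ) : Matrix (Fin T) (Fin T) ℝ :=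
  1 - M1 X₁ * Y * B2 Y X₁ X₂

noncomputable def Lam1 (Y : Matrix (Fin T) (Fin G) ℝ) (X₁ : Matrix (Fin T) (Fin k₁) ℝ)
    (X₂ : Matrix (Fin T) (Fin k₂) ℝ) : Matrix (Fin T) (Fin T) ℝ :=
  (T : ℝ)⁻¹ • (N1 X₁ X₂ * annM (N1 X₁ X₂ * Y) * N1 X₁ X₂)

noncomputable def Lam2 (Y : Matrix (Fin T) (Fin G) ℝ) (X₁ : Matrix (Fin T) (Fin k₁) ℝ)
    (X₂ : Matrix (Fin T) (Fin k₂) ℝ) : Matrix (Fin T) (Fin T) ℝ :=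
  M1 X₁ * ((T : ℝ)⁻¹ • annM (M1 X₁ * Y) - Psi0 Y X₁ X₂) * M1 X₁

noncomputable def Lam3 (Y : Matrix (Fin T) (Fin G) ℝ) (X₁ : Matrix (Fin T) (Fin k₁) ℝ)
    (X₂ : Matrix (Fin T) (Fin k₂) ℝ) : Matrix (Fin T) (Fin T) ℝ :=
  (T : ℝ)⁻¹ • (M1 X₁ * (N2 Y X₁ X₂)ᵀ * N2 Y X₁ X₂ * M1 X₁)

noncomputable def Lam4 (Y : Matrix (Fin T) (Fin G) ℝ) (X₁ : Matrix (Fin T) (Fin k₁) ℝ) :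
    Matrix (Fin T) (Fin T) ℝ :=
  (T : ℝ)⁻¹ • (M1 X₁ * annM (M1 X₁ * Y) * M1 X₁)

def Ybar (Y : Matrix (Fin T) (Fin G) ℝ) (X₁ : Matrix (Fin T) (Fin k₁) ℝ) :
    Matrix (Fin T) (Fin G ⊕ Fin k₁) ℝ :=
  fromCols Y X₁

def Zfull (Y : Matrix (Fin T) (Fin G) ℝ) (X₁ : Matrix (Fin T) (Fin k₁) ℝ)
    (X₂ : Matrix (Fin T) (Fin k₂) ℝ) : Matrix (Fin T) (Fin G ⊕ (Fin k₁ ⊕ Fin k₂)) ℝ :=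
  fromCols Y (fromCols X₁ X₂)

noncomputable def PsiR (Y : Matrix (Fin T) (Fin G) ℝ) (X₁ : Matrix (Fin T) (Fin k₁) ℝ)
    (X₂ : Matrix (Fin T) (Fin k₂) ℝ) : Matrix (Fin T) (Fin T) ℝ :=
  (T : ℝ)⁻¹ • (annM (Ybar Y X₁) - annM (Zfull Y X₁ X₂))

noncomputable def LamR (Y : Matrix (Fin T) (Fin G) ℝ) (X₁ : Matrix (Fin T) (Fin k₁) ℝ)
    (X₂ : Matrix (Fin T) (Fin k₂) ℝ) : Matrix (Fin T) (Fin T) ℝ :=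
  (T : ℝ)⁻¹ • annM (Zfull Y X₁ X₂)

/-- `σ̂² = (1/T)(y−Yβ̂)ᵀM₁(y−Yβ̂)`. -/
noncomputable def sigHat2 (y : Fin T → ℝ) (Y : Matrix (Fin T) (Fin G) ℝ)
    (X₁ : Matrix (Fin T) (Fin k₁) ℝ) : ℝ :=
  (T : ℝ)⁻¹ * ((y - Y *ᵥ betaOLS y Y X₁) ⬝ᵥ (M1 X₁ *ᵥ (y - Y *ᵥ betaOLS y Y X₁)))

/-- `σ̃² = (1/T)(y−Yβ̃)ᵀM₁(y−Yβ̃)`. -/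
noncomputable def sigTil2 (y : Fin T → ℝ) (Y : Matrix (Fin T) (Fin G) ℝ)
    (X₁ : Matrix (Fin T) (Fin k₁) ℝ) (X₂ : Matrix (Fin T) (Fin k₂) ℝ) : ℝ :=
  (T : ℝ)⁻¹ * ((y - Y *ᵥ beta2S y Y X₁ X₂) ⬝ᵥ (M1 X₁ *ᵥ (y - Y *ᵥ beta2S y Y X₁ X₂)))

/-- `σ̃₁² = (1/T)(y−Yβ̃)ᵀN₁(y−Yβ̃)`. -/
noncomputable def sigTil1sq (y : Fin T → ℝ) (Y : Matrix (Fin T) (Fin G) ℝ)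
    (X₁ : Matrix (Fin T) (Fin k₁) ℝ) (X₂ : Matrix (Fin T) (Fin k₂) ℝ) : ℝ :=
  (T : ℝ)⁻¹ * ((y - Y *ᵥ beta2S y Y X₁ X₂) ⬝ᵥ (N1 X₁ X₂ *ᵥ (y - Y *ᵥ beta2S y Y X₁ X₂)))

/-- `σ̃₂² = σ̂² − (β̃−β̂)ᵀΔ̂⁻¹(β̃−β̂)`. -/
noncomputable def sigTil2sq (y : Fin T → ℝ) (Y : Matrix (Fin T) (Fin G) ℝ)
    (X₁ : Matrix (Fin T) (Fin k₁) ℝ) (X₂ : Matrix (Fin T) (Fin k₂) ℝ) : ℝ :=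
  sigHat2 y Y X₁ -
    (beta2S y Y X₁ X₂ - betaOLS y Y X₁) ⬝ᵥ
      ((Dhat Y X₁ X₂)⁻¹ *ᵥ (beta2S y Y X₁ X₂ - betaOLS y Y X₁))

/-- The rank condition: `X₁`, `X = [X₁, X₂]`, `[Y, X]` and `[P̄[X]Y, X₁]` all have
full column rank. -/
def RankCond (Y : Matrix (Fin T) (Fin G) ℝ) (X₁ : Matrix (Fin T) (Fin k₁) ℝ)
    (X₂ : Matrix (Fin T) (Fin k₂) ℝ) : Prop :=
  X₁.rank = k₁ ∧ (fromCols X₁ X₂).rank = k₁ + k₂ ∧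
    (fromCols Y (fromCols X₁ X₂)).rank = G + (k₁ + k₂) ∧
    (fromCols (Pm X₁ X₂ * Y) X₁).rank = G + k₁

lemma mulVec_injective_iff_rank_eq_card {K m n : Type*} [Field K] [Fintype m] [Fintype n]
    {A : Matrix m n K} : Function.Injective A.mulVec ↔ A.rank = Fintype.card n := by
  rw [mulVec_injective_iff, rank_eq_finrank_span_cols,
    linearIndependent_iff_card_eq_finrank_span, Set.finrank, eq_comm]

lemma isUnit_det_transpose_mul_self {m n : Type*} [Fintype m] [Fintype n] [DecidableEq n]
    {A : Matrix m n ℝ} (hA : Function.Injective A.mulVec) : IsUnit (Aᵀ * A).det := by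
  have := (PosDef.conjTranspose_mul_self A hA).isUnit
  rwa [conjTranspose_eq_transpose_of_trivial, isUnit_iff_isUnit_det] at this

lemma dotProduct_transpose_mul_mul_mulVec {R m n : Type*} [CommSemiring R] [Fintype m]
    [Fintype n] (C : Matrix m n R) (D : Matrix m m R) (y : n → R) :
    y ⬝ᵥ ((Cᵀ * D * C) *ᵥ y) = (C *ᵥ y) ⬝ᵥ (D *ᵥ (C *ᵥ y)) := by
  rw [← mulVec_mulVec, ← mulVec_mulVec, dotProduct_mulVec, vecMul_transpose]

lemma inv_smul_of_ne_zero {K n : Type*} [Field K] [Fintype n] [DecidableEq n]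
    (A : Matrix n n K) {c : K} (hc : c ≠ 0) :
    (c • A)⁻¹ = c⁻¹ • A⁻¹ := by
  by_cases hA : IsUnit A.det
  · have := invertibleOfNonzero hc
    rw [inv_smul _ _ hA, invOf_eq_inv]
  · have hcA : ¬IsUnit (c • A).det := by
      rw [det_smul]
      exact fun h => hA (IsUnit.mul_iff.mp h).2
    rw [nonsing_inv_apply_not_isUnit _ hA, nonsing_inv_apply_not_isUnit _ hcA, smul_zero]

section Inverse

variable {K g t : Type*} [CommRing K] [Fintype g] [DecidableEq g] {A₁ A₂ A₃ : Matrix g g K}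

lemma inv_sub_inv_inv (hA : A₁ = A₂ + A₃) (h₁ : IsUnit A₁.det) (h₂ : IsUnit A₂.det)
    (h₃ : IsUnit A₃.det) : (A₂⁻¹ - A₁⁻¹)⁻¹ = A₁ * A₃⁻¹ * A₂ := by
  have hmul : (A₂⁻¹ - A₁⁻¹) * A₁ = A₂⁻¹ * A₃ := by
    rw [Matrix.sub_mul, nonsing_inv_mul _ h₁, hA, Matrix.mul_add, nonsing_inv_mul _ h₂]
    abel
  apply inv_eq_right_inv
  rw [← Matrix.mul_assoc, ← Matrix.mul_assoc, hmul, Matrix.mul_assoc A₂⁻¹,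
    mul_nonsing_inv _ h₃, Matrix.mul_one, nonsing_inv_mul _ h₂]

lemma transpose_mul_inv_sub_inv_inv_mul {Q R S : Matrix g t K} (hA : A₁ = A₂ + A₃)
    (hS : S = Q + R) (hA₂ : A₂ᵀ = A₂) (hA₃ : A₃ᵀ = A₃)
    (h₁ : IsUnit A₁.det) (h₂ : IsUnit A₂.det) (h₃ : IsUnit A₃.det) :
    (A₂⁻¹ * Q - A₁⁻¹ * S)ᵀ * (A₂⁻¹ - A₁⁻¹)⁻¹ * (A₂⁻¹ * Q - A₁⁻¹ * S)
      = Qᵀ * A₂⁻¹ * Q + Rᵀ * A₃⁻¹ * R - Sᵀ * A₁⁻¹ * S := by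
  set C := A₂⁻¹ * Q - A₁⁻¹ * S
  have hA₁ : A₁ᵀ = A₁ := by rw [hA, transpose_add, hA₂, hA₃]
  have hA₂inv : (A₂⁻¹)ᵀ = A₂⁻¹ := by rw [transpose_nonsing_inv, hA₂]
  have hA₁C : A₁ * C = A₃ * (A₂⁻¹ * Q) - R := by
    rw [Matrix.mul_sub, mul_nonsing_inv_cancel_left _ _ h₁, hA, Matrix.add_mul,
      mul_nonsing_inv_cancel_left _ _ h₂, hS]
    abel
  have hA₂C : A₃⁻¹ * (A₂ * C) = A₁⁻¹ * S - A₃⁻¹ * R := by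
    have hA₂' : A₂ = A₁ - A₃ := by rw [hA]; abel
    rw [Matrix.mul_sub A₂, mul_nonsing_inv_cancel_left _ _ h₂, hA₂', Matrix.sub_mul,
      mul_nonsing_inv_cancel_left _ _ h₁, hS, Matrix.mul_sub, Matrix.mul_sub,
      nonsing_inv_mul_cancel_left _ _ h₃, Matrix.mul_add]
    abel
  have hcross (X : Matrix g t K) : A₂⁻¹ * (A₃ * (A₁⁻¹ * X)) = A₂⁻¹ * X - A₁⁻¹ * X := by
    have hA₃' : A₃ = A₁ - A₂ := by rw [hA]; abel
    rw [hA₃', Matrix.sub_mul, mul_nonsing_inv_cancel_left _ _ h₁, Matrix.mul_sub,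
      nonsing_inv_mul_cancel_left _ _ h₂]
  calc Cᵀ * (A₂⁻¹ - A₁⁻¹)⁻¹ * C = (A₁ * C)ᵀ * (A₃⁻¹ * (A₂ * C)) := by
        rw [inv_sub_inv_inv hA h₁ h₂ h₃, transpose_mul, hA₁]
        simp only [Matrix.mul_assoc]
    _ = Qᵀ * A₂⁻¹ * Q + Rᵀ * A₃⁻¹ * R - Sᵀ * A₁⁻¹ * S := by
      rw [hA₁C, hA₂C]
      simp only [transpose_sub, transpose_mul, hA₂inv, hA₃, Matrix.sub_mul, Matrix.mul_sub,
        Matrix.mul_assoc, hcross, mul_nonsing_inv_cancel_left _ _ h₃]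
      rw [hS]
      simp only [transpose_add, Matrix.add_mul, Matrix.mul_add]
      abel

end Inverse

section Projection

variable {n : Type*} [Fintype n] [DecidableEq n]

lemma projM_transpose (A : Matrix (Fin T) n ℝ) : (projM A)ᵀ = projM A := by
  simp [projM, transpose_mul, transpose_nonsing_inv, Matrix.mul_assoc]

lemma isSymm_annM (A : Matrix (Fin T) n ℝ) : (annM A).IsSymm := by
  rw [IsSymm, annM, transpose_sub, transpose_one, projM_transpose]

lemma projM_mul_of_transpose_mul_eq {A : Matrix (Fin T) n ℝ} (hA : Function.Injective A.mulVec)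
    {B : Matrix (Fin T) n ℝ} (h : Aᵀ * B = Aᵀ * A) : projM A * B = A := by
  rw [projM, Matrix.mul_assoc, h,
    nonsing_inv_mul_cancel_right _ _ (isUnit_det_transpose_mul_self hA)]

lemma projM_mul_self {A : Matrix (Fin T) n ℝ} (hA : Function.Injective A.mulVec) :
    projM A * A = A :=
  projM_mul_of_transpose_mul_eq (B := A) hA rfl

lemma projM_mul_eq_zero {m : Type*} {A : Matrix (Fin T) n ℝ} {B : Matrix (Fin T) m ℝ}
    (h : Aᵀ * B = 0) : projM A * B = 0 := by
  rw [projM, Matrix.mul_assoc, h, Matrix.mul_zero]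

lemma mul_projM_eq_zero {A : Matrix (Fin T) n ℝ} {M : Matrix (Fin T) (Fin T) ℝ} (h : M * A = 0) :
    M * projM A = 0 := by
  rw [projM, ← Matrix.mul_assoc, ← Matrix.mul_assoc, h, Matrix.zero_mul, Matrix.zero_mul]

lemma annM_mul_self {A : Matrix (Fin T) n ℝ} (hA : Function.Injective A.mulVec) :
    annM A * A = 0 := by
  rw [annM, Matrix.sub_mul, Matrix.one_mul, projM_mul_self hA, sub_self]

lemma annM_mul_of_transpose_mul_eq_zero {m : Type*} {A : Matrix (Fin T) n ℝ}
    {B : Matrix (Fin T) m ℝ} (h : Aᵀ * B = 0) : annM A * B = B := by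
  rw [annM, Matrix.sub_mul, Matrix.one_mul, projM_mul_eq_zero h, sub_zero]

lemma isIdempotentElem_annM {A : Matrix (Fin T) n ℝ} (hA : Function.Injective A.mulVec) :
    IsIdempotentElem (annM A) := by
  rw [IsIdempotentElem]
  nth_rw 2 [annM]
  rw [Matrix.mul_sub, Matrix.mul_one, mul_projM_eq_zero (annM_mul_self hA), sub_zero]

lemma mul_projM_mul_of_mul_eq {C : Matrix (Fin T) n ℝ} {K : Matrix (Fin T) (Fin T) ℝ}
    (hK : K.IsSymm) (h : K * C = C) : K * projM C * K = projM C := by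
  have hleft : K * projM C = projM C := by rw [projM, ← Matrix.mul_assoc, ← Matrix.mul_assoc, h]
  have hright : projM C * K = projM C := by
    rw [← projM_transpose C, ← hK.eq, ← transpose_mul, hleft]
  rw [hleft, hright]

lemma projM_eq_of_range {C : Matrix (Fin T) n ℝ} (hC : Function.Injective C.mulVec)
    {E : Matrix (Fin T) (Fin T) ℝ} (hE : E.IsSymm) (hEC : E * C = C) {D : Matrix n (Fin T) ℝ}
    (hCD : C * D = E) : projM C = E :=
  calc projM C = (E * projM C)ᵀ := by
        rw [projM, ← Matrix.mul_assoc, ← Matrix.mul_assoc, hEC, ← projM, projM_transpose]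
    _ = projM C * E := by rw [transpose_mul, projM_transpose, hE.eq]
    _ = E := by rw [← hCD, ← Matrix.mul_assoc, projM_mul_self hC]

section SymmIdempotent

variable {M : Matrix (Fin T) (Fin T) ℝ}

lemma transpose_mul_mul_of_isSymm (hM : M.IsSymm) {k : Type*} (Y : Matrix (Fin T) k ℝ) :
    (Yᵀ * M * Y)ᵀ = Yᵀ * M * Y := by
  rw [transpose_mul, transpose_mul, hM.eq, transpose_transpose, Matrix.mul_assoc]

lemma transpose_mul_self_of_isSymm (hM : M.IsSymm) (hM' : IsIdempotentElem M) {k : Type*}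
    (Y : Matrix (Fin T) k ℝ) : (M * Y)ᵀ * (M * Y) = Yᵀ * M * Y := by
  rw [transpose_mul, hM.eq, Matrix.mul_assoc, ← Matrix.mul_assoc M, hM'.eq, Matrix.mul_assoc]

lemma projM_mul_eq_of_isSymm (hM : M.IsSymm) (hM' : IsIdempotentElem M)
    (Y : Matrix (Fin T) n ℝ) :
    projM (M * Y) = (Yᵀ * M)ᵀ * (Yᵀ * M * Y)⁻¹ * (Yᵀ * M) := by
  rw [projM, transpose_mul_self_of_isSymm hM hM', transpose_mul, transpose_mul,
    transpose_transpose, hM.eq]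

lemma projM_mul_mul_self_of_isSymm (hM : M.IsSymm) (hM' : IsIdempotentElem M)
    {Y : Matrix (Fin T) n ℝ} (hY : Function.Injective (M * Y).mulVec) :
    projM (M * Y) * Y = M * Y := by
  refine projM_mul_of_transpose_mul_eq hY ?_
  rw [transpose_mul_self_of_isSymm hM hM', transpose_mul, hM.eq]

lemma isUnit_det_transpose_mul_mul_of_isSymm (hM : M.IsSymm) (hM' : IsIdempotentElem M)
    {Y : Matrix (Fin T) n ℝ} (hY : Function.Injective (M * Y).mulVec) :
    IsUnit (Yᵀ * M * Y).det := by
  rw [← transpose_mul_self_of_isSymm hM hM']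
  exact isUnit_det_transpose_mul_self hY

end SymmIdempotent

lemma mulVec_injective_fromCols {m : Type*} [Fintype m] {A : Matrix (Fin T) n ℝ}
    {B : Matrix (Fin T) m ℝ} (hA : Function.Injective A.mulVec)
    (hB : Function.Injective (annM A * B).mulVec) :
    Function.Injective (fromCols B A).mulVec := by
  rw [← coe_mulVecLin, injective_iff_map_eq_zero]
  intro v hv
  rw [mulVecLin_apply, ← Sum.elim_comp_inl_inr v, fromCols_mulVec_sumElim] at hv
  have hb : v ∘ Sum.inl = 0 := by
    refine hB ?_
    have := congrArg (annM A *ᵥ ·) hv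
    simpa only [mulVec_add, mulVec_mulVec, annM_mul_self hA, zero_mulVec, add_zero,
      mulVec_zero] using this
  have ha : v ∘ Sum.inr = 0 := hA (by simpa [hb] using hv)
  rw [← Sum.elim_comp_inl_inr v, hb, ha, Sum.elim_zero_zero]

lemma mulVec_injective_annM_mul {m : Type*} [Fintype m] [DecidableEq m]
    {A : Matrix (Fin T) n ℝ} {B : Matrix (Fin T) m ℝ}
    (h : Function.Injective (fromCols B A).mulVec) :
    Function.Injective (annM A * B).mulVec := by
  have hfactor : annM A * B
      = fromCols B A * fromRows (1 : Matrix m m ℝ) (-((Aᵀ * A)⁻¹ * Aᵀ * B)) := by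
    rw [fromCols_mul_fromRows, annM, projM, Matrix.sub_mul, Matrix.one_mul, Matrix.mul_one,
      Matrix.mul_neg, ← sub_eq_add_neg]
    simp only [Matrix.mul_assoc]
  intro v w hvw
  rw [hfactor, ← mulVec_mulVec, ← mulVec_mulVec] at hvw
  simpa [fromRows_mulVec] using congrArg (· ∘ Sum.inl) (h hvw)

theorem annM_fromCols {m : Type*} [Fintype m] [DecidableEq m] {A : Matrix (Fin T) n ℝ}
    {B : Matrix (Fin T) m ℝ} (hA : Function.Injective A.mulVec)
    (hB : Function.Injective (annM A * B).mulVec) :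
    annM (fromCols B A) = annM A - projM (annM A * B) := by
  set C := annM A * B with hC
  have hCA : Cᵀ * A = 0 := by
    rw [transpose_mul, (isSymm_annM A).eq, Matrix.mul_assoc, annM_mul_self hA, Matrix.mul_zero]
  have hCB : projM C * B = C :=
    projM_mul_mul_self_of_isSymm (isSymm_annM A) (isIdempotentElem_annM hA) hB
  have hproj : projM (fromCols B A) = projM A + projM C := by
    refine projM_eq_of_range (mulVec_injective_fromCols hA hB) ?_ ?_
      (D := fromRows ((Cᵀ * C)⁻¹ * Cᵀ)
        ((Aᵀ * A)⁻¹ * Aᵀ - (Aᵀ * A)⁻¹ * Aᵀ * B * ((Cᵀ * C)⁻¹ * Cᵀ))) ?_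
    · rw [IsSymm, transpose_add, projM_transpose, projM_transpose]
    · rw [mul_fromCols, Matrix.add_mul, Matrix.add_mul, hCB, projM_mul_self hA,
        projM_mul_eq_zero hCA, add_zero, hC, annM, Matrix.sub_mul, Matrix.one_mul,
        add_sub_cancel]
    · rw [fromCols_mul_fromRows, projM, projM, hC, annM, projM]
      simp only [Matrix.sub_mul, Matrix.mul_sub, Matrix.one_mul, Matrix.mul_assoc]
      abel
  rw [annM, hproj, annM]
  abel

end Projection

noncomputable def Zhat (Y : Matrix (Fin T) (Fin G) ℝ) (X₁ : Matrix (Fin T) (Fin k₁) ℝ)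
    (X₂ : Matrix (Fin T) (Fin k₂) ℝ) : Matrix (Fin T) (Fin G ⊕ (Fin k₁ ⊕ Fin G)) ℝ :=
  fromCols Y (fromCols X₁ (Mm X₁ X₂ * Y))

section Regression

variable {Y : Matrix (Fin T) (Fin G) ℝ} {X₁ : Matrix (Fin T) (Fin k₁) ℝ}
  {X₂ : Matrix (Fin T) (Fin k₂) ℝ}

lemma isSymm_M1 : (M1 X₁).IsSymm := isSymm_annM X₁

lemma isSymm_Mm : (Mm X₁ X₂).IsSymm := isSymm_annM _

lemma isIdempotentElem_M1 (hX₁ : Function.Injective X₁.mulVec) : IsIdempotentElem (M1 X₁) :=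
  isIdempotentElem_annM hX₁

lemma isIdempotentElem_Mm (hX : Function.Injective (fromCols X₁ X₂).mulVec) :
    IsIdempotentElem (Mm X₁ X₂) :=
  isIdempotentElem_annM hX

lemma Mm_mul_X₁_eq_zero (hX : Function.Injective (fromCols X₁ X₂).mulVec) :
    Mm X₁ X₂ * X₁ = 0 := by
  have h := annM_mul_self hX
  rw [mul_fromCols, ← fromCols_zero, fromCols_inj.eq_iff] at h
  exact h.1

lemma Mm_mul_M1 (hX : Function.Injective (fromCols X₁ X₂).mulVec) :
    Mm X₁ X₂ * M1 X₁ = Mm X₁ X₂ := by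
  rw [M1, annM, Matrix.mul_sub, Matrix.mul_one, mul_projM_eq_zero (Mm_mul_X₁_eq_zero hX),
    sub_zero]

lemma M1_mul_Mm (hX : Function.Injective (fromCols X₁ X₂).mulVec) :
    M1 X₁ * Mm X₁ X₂ = Mm X₁ X₂ := by
  have h := congrArg transpose (Mm_mul_M1 hX)
  rwa [transpose_mul, isSymm_M1.eq, isSymm_Mm.eq] at h

lemma N1_eq_M1_sub_Mm (hX : Function.Injective (fromCols X₁ X₂).mulVec) :
    N1 X₁ X₂ = M1 X₁ - Mm X₁ X₂ := by
  rw [N1, show Pm X₁ X₂ = 1 - Mm X₁ X₂ from (sub_sub_cancel _ _).symm, Matrix.mul_sub,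
    Matrix.mul_one, M1_mul_Mm hX]

lemma isSymm_N1 (hX : Function.Injective (fromCols X₁ X₂).mulVec) : (N1 X₁ X₂).IsSymm := by
  rw [IsSymm, N1_eq_M1_sub_Mm hX, transpose_sub, isSymm_M1.eq, isSymm_Mm.eq]

lemma isIdempotentElem_N1 (hX₁ : Function.Injective X₁.mulVec)
    (hX : Function.Injective (fromCols X₁ X₂).mulVec) : IsIdempotentElem (N1 X₁ X₂) := by
  rw [IsIdempotentElem, N1_eq_M1_sub_Mm hX, Matrix.mul_sub, Matrix.sub_mul, Matrix.sub_mul,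
    (isIdempotentElem_M1 hX₁).eq, (isIdempotentElem_Mm hX).eq, M1_mul_Mm hX,
    Mm_mul_M1 hX, sub_self, sub_zero]

lemma M1_mul_N1 (hX₁ : Function.Injective X₁.mulVec)
    (hX : Function.Injective (fromCols X₁ X₂).mulVec) : M1 X₁ * N1 X₁ X₂ = N1 X₁ X₂ := by
  rw [N1_eq_M1_sub_Mm hX, Matrix.mul_sub, (isIdempotentElem_M1 hX₁).eq, M1_mul_Mm hX]

namespace RankCond

variable (h : RankCond Y X₁ X₂)
include h

lemma mulVec_injective_X₁ : Function.Injective X₁.mulVec :=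
  mulVec_injective_iff_rank_eq_card.mpr (by simpa using h.1)

lemma mulVec_injective_X : Function.Injective (fromCols X₁ X₂).mulVec :=
  mulVec_injective_iff_rank_eq_card.mpr (by simpa using h.2.1)

lemma mulVec_injective_Mm_mul : Function.Injective (Mm X₁ X₂ * Y).mulVec :=
  mulVec_injective_annM_mul (mulVec_injective_iff_rank_eq_card.mpr (by simpa using h.2.2.1))

lemma mulVec_injective_N1_mul : Function.Injective (N1 X₁ X₂ * Y).mulVec := by
  rw [N1, Matrix.mul_assoc]
  exact mulVec_injective_annM_mul
    (mulVec_injective_iff_rank_eq_card.mpr (by simpa using h.2.2.2))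

lemma mulVec_injective_M1_mul : Function.Injective (M1 X₁ * Y).mulVec := by
  refine Function.Injective.of_comp (f := (Mm X₁ X₂).mulVec) ?_
  simpa only [Function.comp_def, mulVec_mulVec, ← Matrix.mul_assoc,
    Mm_mul_M1 h.mulVec_injective_X] using h.mulVec_injective_Mm_mul

lemma annM_Ybar : annM (Ybar Y X₁) = M1 X₁ - projM (M1 X₁ * Y) :=
  annM_fromCols h.mulVec_injective_X₁ h.mulVec_injective_M1_mul

lemma annM_Mm_mul_mul_X₁ : annM (Mm X₁ X₂ * Y) * X₁ = X₁ := by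
  refine annM_mul_of_transpose_mul_eq_zero ?_
  rw [transpose_mul, isSymm_Mm.eq, Matrix.mul_assoc, Mm_mul_X₁_eq_zero h.mulVec_injective_X,
    Matrix.mul_zero]

lemma mulVec_injective_fromCols_X₁_Mm_mul :
    Function.Injective (fromCols X₁ (Mm X₁ X₂ * Y)).mulVec :=
  mulVec_injective_fromCols h.mulVec_injective_Mm_mul
    (by rw [h.annM_Mm_mul_mul_X₁]; exact h.mulVec_injective_X₁)

lemma annM_fromCols_X₁_Mm_mul :
    annM (fromCols X₁ (Mm X₁ X₂ * Y)) = M1 X₁ - projM (Mm X₁ X₂ * Y) := by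
  rw [annM_fromCols h.mulVec_injective_Mm_mul
      (by rw [h.annM_Mm_mul_mul_X₁]; exact h.mulVec_injective_X₁),
    h.annM_Mm_mul_mul_X₁, annM, M1, annM]
  abel

lemma annM_fromCols_X₁_Mm_mul_mul :
    annM (fromCols X₁ (Mm X₁ X₂ * Y)) * Y = N1 X₁ X₂ * Y := by
  rw [h.annM_fromCols_X₁_Mm_mul, Matrix.sub_mul,
    projM_mul_mul_self_of_isSymm isSymm_Mm (isIdempotentElem_Mm h.mulVec_injective_X)
      h.mulVec_injective_Mm_mul, N1_eq_M1_sub_Mm h.mulVec_injective_X, Matrix.sub_mul]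

lemma mulVec_injective_Zhat : Function.Injective (Zhat Y X₁ X₂).mulVec :=
  mulVec_injective_fromCols h.mulVec_injective_fromCols_X₁_Mm_mul
    (by rw [h.annM_fromCols_X₁_Mm_mul_mul]; exact h.mulVec_injective_N1_mul)

lemma annM_Zhat :
    annM (Zhat Y X₁ X₂) = M1 X₁ - projM (Mm X₁ X₂ * Y) - projM (N1 X₁ X₂ * Y) := by
  rw [Zhat, annM_fromCols h.mulVec_injective_fromCols_X₁_Mm_mul
      (by rw [h.annM_fromCols_X₁_Mm_mul_mul]; exact h.mulVec_injective_N1_mul),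
    h.annM_fromCols_X₁_Mm_mul_mul, h.annM_fromCols_X₁_Mm_mul]

lemma smul_Psi0 (hT : (T : ℝ) ≠ 0) :
    (T : ℝ) • Psi0 Y X₁ X₂
      = projM (N1 X₁ X₂ * Y) + projM (Mm X₁ X₂ * Y) - projM (M1 X₁ * Y) := by
  have hX₁ := h.mulVec_injective_X₁
  have hX := h.mulVec_injective_X
  have hS : Yᵀ * M1 X₁ = Yᵀ * N1 X₁ X₂ + Yᵀ * Mm X₁ X₂ := by
    rw [← Matrix.mul_add, N1_eq_M1_sub_Mm hX, sub_add_cancel]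
  have hA : Yᵀ * M1 X₁ * Y = Yᵀ * N1 X₁ X₂ * Y + Yᵀ * Mm X₁ X₂ * Y := by
    rw [hS, Matrix.add_mul]
  have u₁ := isUnit_det_transpose_mul_mul_of_isSymm isSymm_M1 (isIdempotentElem_M1 hX₁)
    h.mulVec_injective_M1_mul
  have u₂ := isUnit_det_transpose_mul_mul_of_isSymm (isSymm_N1 hX) (isIdempotentElem_N1 hX₁ hX)
    h.mulVec_injective_N1_mul
  have u₃ := isUnit_det_transpose_mul_mul_of_isSymm isSymm_Mm (isIdempotentElem_Mm hX)
    h.mulVec_injective_Mm_mul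
  have hDhat : Dhat Y X₁ X₂
      = (T : ℝ) • ((Yᵀ * N1 X₁ X₂ * Y)⁻¹ - (Yᵀ * M1 X₁ * Y)⁻¹) := by
    rw [Dhat, OmIV, OmLS, inv_smul_of_ne_zero _ (inv_ne_zero hT),
      inv_smul_of_ne_zero _ (inv_ne_zero hT), inv_inv, smul_sub]
  rw [Psi0, hDhat, inv_smul_of_ne_zero _ hT, Matrix.mul_smul, Matrix.smul_mul, smul_smul,
    mul_inv_cancel₀ hT, one_smul, C1, B2, B1,
    transpose_mul_inv_sub_inv_inv_mul hA hS
      (transpose_mul_mul_of_isSymm (isSymm_N1 hX) Y) (transpose_mul_mul_of_isSymm isSymm_Mm Y)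
      u₁ u₂ u₃,
    projM_mul_eq_of_isSymm (isSymm_N1 hX) (isIdempotentElem_N1 hX₁ hX),
    projM_mul_eq_of_isSymm isSymm_Mm (isIdempotentElem_Mm hX),
    projM_mul_eq_of_isSymm isSymm_M1 (isIdempotentElem_M1 hX₁)]

lemma smul_Lam4 (hT : (T : ℝ) ≠ 0) : (T : ℝ) • Lam4 Y X₁ = annM (Ybar Y X₁) := by
  have hM1 := isIdempotentElem_M1 h.mulVec_injective_X₁
  rw [Lam4, smul_smul, mul_inv_cancel₀ hT, one_smul, h.annM_Ybar, annM, Matrix.mul_sub,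
    Matrix.sub_mul, Matrix.mul_one, hM1.eq,
    mul_projM_mul_of_mul_eq isSymm_M1 (by rw [← Matrix.mul_assoc, hM1.eq])]

lemma smul_Lam2 (hT : (T : ℝ) ≠ 0) : (T : ℝ) • Lam2 Y X₁ X₂ = annM (Zhat Y X₁ X₂) := by
  have hX₁ := h.mulVec_injective_X₁
  have hX := h.mulVec_injective_X
  have hcancel : 1 - projM (M1 X₁ * Y) - (T : ℝ) • Psi0 Y X₁ X₂
      = 1 - (projM (N1 X₁ X₂ * Y) + projM (Mm X₁ X₂ * Y)) := by
    rw [h.smul_Psi0 hT]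
    abel
  rw [Lam2, ← Matrix.smul_mul, ← Matrix.mul_smul, smul_sub, smul_smul, mul_inv_cancel₀ hT,
    one_smul, annM, hcancel, h.annM_Zhat, Matrix.mul_sub, Matrix.sub_mul, Matrix.mul_one,
    (isIdempotentElem_M1 hX₁).eq, Matrix.mul_add, Matrix.add_mul,
    mul_projM_mul_of_mul_eq isSymm_M1 (by rw [← Matrix.mul_assoc, M1_mul_N1 hX₁ hX]),
    mul_projM_mul_of_mul_eq isSymm_M1 (by rw [← Matrix.mul_assoc, M1_mul_Mm hX])]
  abel

lemma rank_Zhat : (Zhat Y X₁ X₂).rank = G + (k₁ + G) := by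
  simpa using mulVec_injective_iff_rank_eq_card.mp h.mulVec_injective_Zhat

end RankCond

end Regression

theorem stmt14_general {T G k₁ k₂ : ℕ}
    (hT : 0 < T)
    (y : Fin T → ℝ) (Y : Matrix (Fin T) (Fin G) ℝ)
    (X₁ : Matrix (Fin T) (Fin k₁) ℝ) (X₂ : Matrix (Fin T) (Fin k₂) ℝ)
    (hrank : RankCond Y X₁ X₂) :
    (fromCols Y (fromCols X₁ (Mm X₁ X₂ * Y))).rank = G + (k₁ + G) ∧
    y ⬝ᵥ (annM (Ybar Y X₁) *ᵥ y) -
        y ⬝ᵥ (annM (fromCols Y (fromCols X₁ (Mm X₁ X₂ * Y))) *ᵥ y)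
      = (T : ℝ) * (y ⬝ᵥ (Psi0 Y X₁ X₂ *ᵥ y)) ∧
    y ⬝ᵥ (annM (Ybar Y X₁) *ᵥ y) -
        y ⬝ᵥ (annM (fromCols Y (fromCols X₁ (Mm X₁ X₂ * Y))) *ᵥ y)
      = (T : ℝ) *
          ((beta2S y Y X₁ X₂ - betaOLS y Y X₁) ⬝ᵥ
            ((Dhat Y X₁ X₂)⁻¹ *ᵥ (beta2S y Y X₁ X₂ - betaOLS y Y X₁))) ∧
    y ⬝ᵥ (annM (Ybar Y X₁) *ᵥ y) = (T : ℝ) * (y ⬝ᵥ (Lam4 Y X₁ *ᵥ y)) ∧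
    y ⬝ᵥ (annM (fromCols Y (fromCols X₁ (Mm X₁ X₂ * Y))) *ᵥ y)
      = (T : ℝ) * (y ⬝ᵥ (Lam2 Y X₁ X₂ *ᵥ y)) := by
  rw [show fromCols Y (fromCols X₁ (Mm X₁ X₂ * Y)) = Zhat Y X₁ X₂ from rfl]
  have hT' : (T : ℝ) ≠ 0 := Nat.cast_ne_zero.mpr hT.ne'
  have quadratic (c : ℝ) (A : Matrix (Fin T) (Fin T) ℝ) :
      y ⬝ᵥ ((c • A) *ᵥ y) = c * (y ⬝ᵥ (A *ᵥ y)) := by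
    rw [smul_mulVec, dotProduct_smul, smul_eq_mul]
  have hdiff : y ⬝ᵥ (annM (Ybar Y X₁) *ᵥ y) - y ⬝ᵥ (annM (Zhat Y X₁ X₂) *ᵥ y)
      = (T : ℝ) * (y ⬝ᵥ (Psi0 Y X₁ X₂ *ᵥ y)) := by
    rw [← dotProduct_sub, ← sub_mulVec, ← quadratic, hrank.smul_Psi0 hT', hrank.annM_Ybar,
      hrank.annM_Zhat]
    congr 2
    abel
  refine ⟨hrank.rank_Zhat, hdiff, ?_, ?_, ?_⟩
  · rw [hdiff, Psi0, dotProduct_transpose_mul_mul_mulVec, beta2S, betaOLS, ← sub_mulVec, C1]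
  · rw [← hrank.smul_Lam4 hT', quadratic]
  · rw [← hrank.smul_Lam2 hT', quadratic]

/-- **Regression-based formulation.**  Under the rank condition, with `V̂ = MY` and
`Ẑ = [Y, X₁, V̂]` (which has full column rank), the difference between the restricted
and unrestricted residual sums of squares satisfies
`yᵀM̄[Ȳ]y − yᵀM̄[Ẑ]y = T·yᵀΨ₀y = T·(β̃−β̂)ᵀΔ̂⁻¹(β̃−β̂)`; moreover
`yᵀM̄[Ȳ]y = T·yᵀΛ₄y` and `yᵀM̄[Ẑ]y = T·yᵀΛ₂y`. -/
theorem stmt14 {T G k₁ k₂ : ℕ}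
    (hT : 0 < T) (hG : 0 < G) (hk₁ : 0 < k₁) (hk₂ : 0 < k₂)
    (y : Fin T → ℝ) (Y : Matrix (Fin T) (Fin G) ℝ)
    (X₁ : Matrix (Fin T) (Fin k₁) ℝ) (X₂ : Matrix (Fin T) (Fin k₂) ℝ)
    (hrank : RankCond Y X₁ X₂) :
    (fromCols Y (fromCols X₁ (Mm X₁ X₂ * Y))).rank = G + (k₁ + G) ∧
    y ⬝ᵥ (annM (Ybar Y X₁) *ᵥ y) -
        y ⬝ᵥ (annM (fromCols Y (fromCols X₁ (Mm X₁ X₂ * Y))) *ᵥ y)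
      = (T : ℝ) * (y ⬝ᵥ (Psi0 Y X₁ X₂ *ᵥ y)) ∧
    y ⬝ᵥ (annM (Ybar Y X₁) *ᵥ y) -
        y ⬝ᵥ (annM (fromCols Y (fromCols X₁ (Mm X₁ X₂ * Y))) *ᵥ y)
      = (T : ℝ) *
          ((beta2S y Y X₁ X₂ - betaOLS y Y X₁) ⬝ᵥ
            ((Dhat Y X₁ X₂)⁻¹ *ᵥ (beta2S y Y X₁ X₂ - betaOLS y Y X₁))) ∧
    y ⬝ᵥ (annM (Ybar Y X₁) *ᵥ y) = (T : ℝ) * (y ⬝ᵥ (Lam4 Y X₁ *ᵥ y)) ∧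
    y ⬝ᵥ (annM (fromCols Y (fromCols X₁ (Mm X₁ X₂ * Y))) *ᵥ y)
      = (T : ℝ) * (y ⬝ᵥ (Lam2 Y X₁ X₂ *ᵥ y)) :=
  stmt14_general hT y Y X₁ X₂ hrank
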